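/- arXiv:2311.04321 — 5 statements merged into one kernel-verified Lean document; each statement's English description precedes it below -/
import Mathlib

section
/- Let (D,*,∘) be a digroup, B a subdigroup and I an ideal of D. Then the following are equivalent: (1) D = B ∘ I and B ∩ I = {1}; (2) every a ∈ D has a unique expression a = b ∘ i with b ∈ B, i ∈ I; (3) every a ∈ D has a unique expression a = i ∘ b with b ∈ B, i ∈ I; (4) D = B * I and B ∩ I = {1}; (5) every a ∈ D has a unique expression a = b * i; (6) every a ∈ D has a unique expression a = i * b; (7) there is an idempotent digroup endomorphism of D with image B and kernel I. -/
/-- A digroup: two group structures on the same set with a common identity. -/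
structure Digroup (D : Type*) where
  mul : D → D → D
  inv : D → D
  omul : D → D → D
  oinv : D → D
  one : D
  mul_assoc : ∀ a b c, mul (mul a b) c = mul a (mul b c)
  one_mul : ∀ a, mul one a = a
  mul_one : ∀ a, mul a one = a
  inv_mul : ∀ a, mul (inv a) a = one
  mul_inv : ∀ a, mul a (inv a) = one
  omul_assoc : ∀ a b c, omul (omul a b) c = omul a (omul b c)
  one_omul : ∀ a, omul one a = a
  omul_one : ∀ a, omul a one = a
  oinv_omul : ∀ a, omul (oinv a) a = one
  omul_oinv : ∀ a, omul a (oinv a) = one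

/-- A subdigroup: a subset closed under both group structures. -/
def Digroup.IsSubdigroup {D : Type*} (H : Digroup D) (B : Set D) : Prop :=
  H.one ∈ B ∧ (∀ a ∈ B, ∀ b ∈ B, H.mul a b ∈ B) ∧ (∀ a ∈ B, H.inv a ∈ B) ∧
    (∀ a ∈ B, ∀ b ∈ B, H.omul a b ∈ B) ∧ (∀ a ∈ B, H.oinv a ∈ B)

/-- An ideal: a normal subgroup for both group structures whose cosets with
respect to the two operations coincide. -/
def Digroup.IsIdeal {D : Type*} (H : Digroup D) (I : Set D) : Prop :=
  H.one ∈ I ∧ (∀ a ∈ I, ∀ b ∈ I, H.mul a b ∈ I) ∧ (∀ a ∈ I, H.inv a ∈ I) ∧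
    (∀ a : D, ∀ i ∈ I, H.mul (H.mul a i) (H.inv a) ∈ I) ∧
    (∀ a ∈ I, ∀ b ∈ I, H.omul a b ∈ I) ∧ (∀ a ∈ I, H.oinv a ∈ I) ∧
    (∀ a : D, ∀ i ∈ I, H.omul (H.omul a i) (H.oinv a) ∈ I) ∧
    (∀ a : D, {x | ∃ i ∈ I, x = H.mul a i} = {x | ∃ i ∈ I, x = H.omul a i})

/-- A digroup endomorphism: a group homomorphism for both operations. -/
def Digroup.IsEndo {D : Type*} (H : Digroup D) (f : D → D) : Prop :=
  (∀ a b, f (H.mul a b) = H.mul (f a) (f b)) ∧ (∀ a b, f (H.omul a b) = H.omul (f a) (f b))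

namespace Digroup

variable {D : Type*}

/-- The digroup obtained by exchanging the two group structures. -/
def swap (H : Digroup D) : Digroup D where
  mul := H.omul
  inv := H.oinv
  omul := H.mul
  oinv := H.inv
  one := H.one
  mul_assoc := H.omul_assoc
  one_mul := H.one_omul
  mul_one := H.omul_one
  inv_mul := H.oinv_omul
  mul_inv := H.omul_oinv
  omul_assoc := H.mul_assoc
  one_omul := H.one_mul
  omul_one := H.mul_one
  oinv_omul := H.inv_mul
  omul_oinv := H.mul_inv

theorem swap_sub (H : Digroup D) {B : Set D} (h : H.IsSubdigroup B) :
    H.swap.IsSubdigroup B :=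
  ⟨h.1, h.2.2.2.1, h.2.2.2.2, h.2.1, h.2.2.1⟩

theorem swap_ideal (H : Digroup D) {I : Set D} (h : H.IsIdeal I) :
    H.swap.IsIdeal I :=
  ⟨h.1, h.2.2.2.2.1, h.2.2.2.2.2.1, h.2.2.2.2.2.2.1, h.2.1, h.2.2.1, h.2.2.2.1,
   fun a => (h.2.2.2.2.2.2.2 a).symm⟩

theorem ocancel_left (H : Digroup D) {a b c : D} (h : H.omul a b = H.omul a c) : b = c := by
  have h2 := congrArg (H.omul (H.oinv a)) h
  rwa [← H.omul_assoc, ← H.omul_assoc, H.oinv_omul, H.one_omul, H.one_omul] at h2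

theorem ocancel_right (H : Digroup D) {a b c : D} (h : H.omul a c = H.omul b c) : a = b := by
  have h2 := congrArg (fun x => H.omul x (H.oinv c)) h
  rwa [H.omul_assoc, H.omul_assoc, H.omul_oinv, H.omul_one, H.omul_one] at h2

theorem oinv_oinv (H : Digroup D) (a : D) : H.oinv (H.oinv a) = a :=
  H.ocancel_left (a := H.oinv a) (by rw [H.omul_oinv, H.oinv_omul])

theorem coset_mul (H : Digroup D) {I : Set D} (hI : H.IsIdeal I) (a : D) {i : D}
    (hi : i ∈ I) : ∃ j ∈ I, H.mul a i = H.omul a j := by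
  have h1 : H.mul a i ∈ {x | ∃ i ∈ I, x = H.mul a i} := ⟨i, hi, rfl⟩
  rw [hI.2.2.2.2.2.2.2 a] at h1
  exact h1

theorem coset_omul (H : Digroup D) {I : Set D} (hI : H.IsIdeal I) (a : D) {i : D}
    (hi : i ∈ I) : ∃ j ∈ I, H.omul a i = H.mul a j := by
  have h1 : H.omul a i ∈ {x | ∃ i ∈ I, x = H.omul a i} := ⟨i, hi, rfl⟩
  rw [← hI.2.2.2.2.2.2.2 a] at h1
  exact h1

theorem oconj (H : Digroup D) {I : Set D} (hI : H.IsIdeal I) (a : D) {i : D} (hi : i ∈ I) :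
    H.omul (H.omul a i) (H.oinv a) ∈ I :=
  hI.2.2.2.2.2.2.1 a i hi

theorem oconj' (H : Digroup D) {I : Set D} (hI : H.IsIdeal I) (b : D) {i : D} (hi : i ∈ I) :
    H.omul (H.omul (H.oinv b) i) b ∈ I := by
  have h1 := hI.2.2.2.2.2.2.1 (H.oinv b) i hi
  rwa [H.oinv_oinv] at h1

theorem sand1 (H : Digroup D) (b i : D) :
    H.omul b (H.omul (H.omul (H.oinv b) i) b) = H.omul i b := by
  rw [← H.omul_assoc, ← H.omul_assoc, H.omul_oinv, H.one_omul]

theorem sand2 (H : Digroup D) (b i : D) :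
    H.omul (H.omul (H.omul b i) (H.oinv b)) b = H.omul b i := by
  rw [H.omul_assoc, H.oinv_omul, H.omul_one]

theorem reassoc (H : Digroup D) (b i b' i' : D) :
    H.omul (H.omul b i) (H.omul b' i') =
      H.omul (H.omul b b') (H.omul (H.omul (H.omul (H.oinv b') i) b') i') := by
  simp only [H.omul_assoc]
  rw [← H.omul_assoc b' (H.oinv b'), H.omul_oinv, H.one_omul]

theorem c1_to_c2 (H : Digroup D) {B I : Set D} (hB : H.IsSubdigroup B) (hI : H.IsIdeal I)
    (h : (∀ a : D, ∃ b ∈ B, ∃ i ∈ I, a = H.omul b i) ∧ B ∩ I = {H.one}) :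
    ∀ a : D, ∃! p : D × D, p.1 ∈ B ∧ p.2 ∈ I ∧ a = H.omul p.1 p.2 := by
  intro a
  obtain ⟨b, hb, i, hi, ha⟩ := h.1 a
  refine ⟨(b, i), ⟨hb, hi, ha⟩, ?_⟩
  rintro ⟨b', i'⟩ ⟨hb', hi', ha'⟩
  have he : H.omul b' i' = H.omul b i := by rw [← ha, ← ha']
  have key : H.omul (H.oinv b) b' = H.omul i (H.oinv i') := by
    have h1 : H.omul (H.omul b' i') (H.oinv i') = b' := by
      rw [H.omul_assoc, H.omul_oinv, H.omul_one]
    calc H.omul (H.oinv b) b'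
        = H.omul (H.oinv b) (H.omul (H.omul b i) (H.oinv i')) := by rw [← he, h1]
      _ = H.omul i (H.oinv i') := by
          rw [← H.omul_assoc, ← H.omul_assoc, H.oinv_omul, H.one_omul]
  have hmem : H.omul (H.oinv b) b' ∈ B ∩ I := by
    refine ⟨hB.2.2.2.1 _ (hB.2.2.2.2 b hb) b' hb', ?_⟩
    rw [key]
    exact hI.2.2.2.2.1 i hi _ (hI.2.2.2.2.2.1 i' hi')
  rw [h.2] at hmem
  have hb1 : H.omul (H.oinv b) b' = H.one := hmem
  have hbb : b' = b := by
    have h2 := congrArg (H.omul b) hb1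
    rwa [← H.omul_assoc, H.omul_oinv, H.one_omul, H.omul_one] at h2
  have hii : i' = i := by
    apply H.ocancel_left (a := b)
    rw [← hbb, he, hbb]
  rw [Prod.mk.injEq]
  exact ⟨hbb, hii⟩

theorem c2_to_c3 (H : Digroup D) {B I : Set D} (hB : H.IsSubdigroup B) (hI : H.IsIdeal I)
    (h : ∀ a : D, ∃! p : D × D, p.1 ∈ B ∧ p.2 ∈ I ∧ a = H.omul p.1 p.2) :
    ∀ a : D, ∃! p : D × D, p.1 ∈ B ∧ p.2 ∈ I ∧ a = H.omul p.2 p.1 := by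
  intro a
  obtain ⟨⟨b, i⟩, ⟨hb, hi, ha⟩, huniq⟩ := h a
  refine ⟨(b, H.omul (H.omul b i) (H.oinv b)), ⟨hb, H.oconj hI b hi, ?_⟩, ?_⟩
  · rw [ha]; exact (H.sand2 b i).symm
  · rintro ⟨b', j'⟩ ⟨hb', hj', ha'⟩
    have hd : a = H.omul b' (H.omul (H.omul (H.oinv b') j') b') := by
      rw [ha', H.sand1]
    have h1 := huniq (b', H.omul (H.omul (H.oinv b') j') b') ⟨hb', H.oconj' hI b' hj', hd⟩
    have hfst : b' = b := congrArg Prod.fst h1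
    have hsnd : H.omul (H.omul (H.oinv b') j') b' = i := congrArg Prod.snd h1
    have h3 : H.omul j' b' = H.omul b' i := by rw [← hsnd, H.sand1]
    have h4 : j' = H.omul (H.omul b' i) (H.oinv b') := by
      have h5 := congrArg (fun x => H.omul x (H.oinv b')) h3
      simpa [H.omul_assoc, H.omul_oinv, H.omul_one] using h5
    rw [Prod.mk.injEq]
    exact ⟨hfst, by rw [h4, hfst]⟩

theorem c3_to_c1 (H : Digroup D) {B I : Set D} (hB : H.IsSubdigroup B) (hI : H.IsIdeal I)
    (h : ∀ a : D, ∃! p : D × D, p.1 ∈ B ∧ p.2 ∈ I ∧ a = H.omul p.2 p.1) :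
    (∀ a : D, ∃ b ∈ B, ∃ i ∈ I, a = H.omul b i) ∧ B ∩ I = {H.one} := by
  constructor
  · intro a
    obtain ⟨⟨b, j⟩, ⟨hb, hj, ha⟩, -⟩ := h a
    exact ⟨b, hb, H.omul (H.omul (H.oinv b) j) b, H.oconj' hI b hj,
      by rw [ha]; exact (H.sand1 b j).symm⟩
  · ext x
    simp only [Set.mem_inter_iff, Set.mem_singleton_iff]
    constructor
    · rintro ⟨hxB, hxI⟩
      obtain ⟨p, hp, huniq⟩ := h x
      have h1 := huniq (x, H.one) ⟨hxB, hI.1, by rw [H.one_omul]⟩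
      have h2 := huniq (H.one, x) ⟨hB.1, hxI, by rw [H.omul_one]⟩
      exact congrArg Prod.fst (h1.trans h2.symm)
    · rintro rfl; exact ⟨hB.1, hI.1⟩

theorem exists_mul_of_exists_omul (H : Digroup D) {B I : Set D} (hI : H.IsIdeal I)
    (h : ∀ a : D, ∃ b ∈ B, ∃ i ∈ I, a = H.omul b i) :
    ∀ a : D, ∃ b ∈ B, ∃ i ∈ I, a = H.mul b i := by
  intro a
  obtain ⟨b, hb, i, hi, ha⟩ := h a
  obtain ⟨j, hj, he⟩ := H.coset_omul hI b hi
  exact ⟨b, hb, j, hj, by rw [ha, he]⟩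

theorem c2_to_c7 (H : Digroup D) {B I : Set D} (hB : H.IsSubdigroup B) (hI : H.IsIdeal I)
    (h : ∀ a : D, ∃! p : D × D, p.1 ∈ B ∧ p.2 ∈ I ∧ a = H.omul p.1 p.2) :
    ∃ e : D → D, H.IsEndo e ∧ e ∘ e = e ∧ Set.range e = B ∧ {x | e x = H.one} = I := by
  choose f hf using h
  have hspec : ∀ a, (f a).1 ∈ B ∧ (f a).2 ∈ I ∧ a = H.omul (f a).1 (f a).2 :=
    fun a => (hf a).1
  have huniq : ∀ a (p : D × D), (p.1 ∈ B ∧ p.2 ∈ I ∧ a = H.omul p.1 p.2) → p = f a :=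
    fun a => (hf a).2
  have heq : ∀ a b i, b ∈ B → i ∈ I → a = H.omul b i → (f a).1 = b := fun a b i hb hi ha =>
    (congrArg Prod.fst (huniq a (b, i) ⟨hb, hi, ha⟩)).symm
  refine ⟨fun a => (f a).1, ⟨?_, ?_⟩, ?_, ?_, ?_⟩
  · intro x y
    obtain ⟨j, hj, hxe⟩ := H.coset_omul hI (f x).1 (hspec x).2.1
    obtain ⟨k, hk, hye⟩ := H.coset_omul hI (f y).1 (hspec y).2.1
    have hx : x = H.mul (f x).1 j := (hspec x).2.2.trans hxe
    have hy : y = H.mul (f y).1 k := (hspec y).2.2.trans hye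
    have hr : H.mul x y = H.mul (H.mul (f x).1 (f y).1)
        (H.mul (H.mul (H.mul (H.inv (f y).1) j) (f y).1) k) := by
      calc H.mul x y = H.mul (H.mul (f x).1 j) (H.mul (f y).1 k) := by rw [← hx, ← hy]
        _ = _ := H.swap.reassoc (f x).1 j (f y).1 k
    have htail : H.mul (H.mul (H.mul (H.inv (f y).1) j) (f y).1) k ∈ I :=
      hI.2.1 _ (H.swap.oconj' (H.swap_ideal hI) (f y).1 hj) k hk
    obtain ⟨m, hm, hme⟩ := H.coset_mul hI (H.mul (f x).1 (f y).1) htail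
    exact heq (H.mul x y) _ m (hB.2.1 _ (hspec x).1 _ (hspec y).1) hm (hr.trans hme)
  · intro x y
    have hr : H.omul x y = H.omul (H.omul (f x).1 (f y).1)
        (H.omul (H.omul (H.omul (H.oinv (f y).1) (f x).2) (f y).1) (f y).2) := by
      calc H.omul x y = H.omul (H.omul (f x).1 (f x).2) (H.omul (f y).1 (f y).2) := by
            rw [← (hspec x).2.2, ← (hspec y).2.2]
        _ = _ := H.reassoc (f x).1 (f x).2 (f y).1 (f y).2
    have htail : H.omul (H.omul (H.omul (H.oinv (f y).1) (f x).2) (f y).1) (f y).2 ∈ I :=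
      hI.2.2.2.2.1 _ (H.oconj' hI (f y).1 (hspec x).2.1) _ (hspec y).2.1
    exact heq (H.omul x y) _ _ (hB.2.2.2.1 _ (hspec x).1 _ (hspec y).1) htail hr
  · funext a
    show (f (f a).1).1 = (f a).1
    exact heq _ _ H.one (hspec a).1 hI.1 (H.omul_one _).symm
  · ext x
    constructor
    · rintro ⟨y, rfl⟩; exact (hspec y).1
    · intro hx; exact ⟨x, heq x x H.one hx hI.1 (H.omul_one x).symm⟩
  · ext x
    simp only [Set.mem_setOf_eq]
    constructor
    · intro hx
      have h1 := (hspec x).2.2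
      rw [hx, H.one_omul] at h1
      rw [h1]; exact (hspec x).2.1
    · intro hx
      exact heq x H.one x hB.1 hx (H.one_omul x).symm

theorem c7_to_c1 (H : Digroup D) {B I : Set D}
    (h : ∃ e : D → D, H.IsEndo e ∧ e ∘ e = e ∧ Set.range e = B ∧ {x | e x = H.one} = I) :
    (∀ a : D, ∃ b ∈ B, ∃ i ∈ I, a = H.omul b i) ∧ B ∩ I = {H.one} := by
  obtain ⟨e, ⟨hm, ho⟩, hid, hrange, hker⟩ := h
  have he1 : e H.one = H.one := by
    have h1 := ho H.one H.one
    rw [H.omul_one] at h1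
    exact H.ocancel_left (a := e H.one) (h1.symm.trans (H.omul_one _).symm)
  have hidem : ∀ x, e (e x) = e x := fun x => congrFun hid x
  constructor
  · intro a
    refine ⟨e a, hrange ▸ Set.mem_range_self a, H.omul (H.oinv (e a)) a, ?_, ?_⟩
    · rw [← hker]
      show e _ = H.one
      have hoi : e (H.oinv (e a)) = H.oinv (e a) := by
        have h1 : H.omul (e (H.oinv (e a))) (e (e a)) = H.one := by
          rw [← ho, H.oinv_omul, he1]
        rw [hidem] at h1
        exact H.ocancel_right (h1.trans (H.oinv_omul (e a)).symm)
      rw [ho, hoi, H.oinv_omul]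
    · rw [← H.omul_assoc, H.omul_oinv, H.one_omul]
  · ext x
    simp only [Set.mem_inter_iff, Set.mem_singleton_iff]
    constructor
    · rintro ⟨hxB, hxI⟩
      rw [← hrange] at hxB
      obtain ⟨y, hy⟩ := hxB
      have hex : e x = H.one := by rw [← hker] at hxI; exact hxI
      have h1 : e x = x := by rw [← hy, hidem]
      rw [← h1]; exact hex
    · rintro rfl
      exact ⟨by rw [← hrange]; exact ⟨H.one, he1⟩, by rw [← hker]; exact he1⟩

end Digroup

/-- Equivalent characterizations of a digroup `D` being the inner semidirect
product of a subdigroup `B` and an ideal `I`. -/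
theorem stmt5 {D : Type*} (H : Digroup D) (B I : Set D)
    (hB : H.IsSubdigroup B) (hI : H.IsIdeal I) :
    List.TFAE
      [ (∀ a : D, ∃ b ∈ B, ∃ i ∈ I, a = H.omul b i) ∧ B ∩ I = {H.one},
        ∀ a : D, ∃! p : D × D, p.1 ∈ B ∧ p.2 ∈ I ∧ a = H.omul p.1 p.2,
        ∀ a : D, ∃! p : D × D, p.1 ∈ B ∧ p.2 ∈ I ∧ a = H.omul p.2 p.1,
        (∀ a : D, ∃ b ∈ B, ∃ i ∈ I, a = H.mul b i) ∧ B ∩ I = {H.one},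
        ∀ a : D, ∃! p : D × D, p.1 ∈ B ∧ p.2 ∈ I ∧ a = H.mul p.1 p.2,
        ∀ a : D, ∃! p : D × D, p.1 ∈ B ∧ p.2 ∈ I ∧ a = H.mul p.2 p.1,
        ∃ e : D → D, H.IsEndo e ∧ e ∘ e = e ∧ Set.range e = B ∧ {x | e x = H.one} = I ] := by
  tfae_have 1 → 2 := fun h => Digroup.c1_to_c2 H hB hI h
  tfae_have 2 → 3 := fun h => Digroup.c2_to_c3 H hB hI h
  tfae_have 3 → 1 := fun h => Digroup.c3_to_c1 H hB hI h
  tfae_have 1 → 4 := fun h => ⟨Digroup.exists_mul_of_exists_omul H hI h.1, h.2⟩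
  tfae_have 4 → 1 := fun h =>
    ⟨Digroup.exists_mul_of_exists_omul H.swap (H.swap_ideal hI) h.1, h.2⟩
  tfae_have 4 → 5 := fun h => Digroup.c1_to_c2 H.swap (H.swap_sub hB) (H.swap_ideal hI) h
  tfae_have 5 → 6 := fun h => Digroup.c2_to_c3 H.swap (H.swap_sub hB) (H.swap_ideal hI) h
  tfae_have 6 → 4 := fun h => Digroup.c3_to_c1 H.swap (H.swap_sub hB) (H.swap_ideal hI) h
  tfae_have 2 → 7 := fun h => Digroup.c2_to_c7 H hB hI h
  tfae_have 7 → 1 := fun h => Digroup.c7_to_c1 H h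
  tfae_finish
end

section
/- Let (Y,*,∘) and (K,*,∘) be digroups, φ_* : (Y,*) → Aut(K,*) and φ_∘ : (Y,∘) → Aut(K,∘) group antihomomorphisms, and Λ : Y → Sym(K) a map with Λ_1 = id_K and Λ_y(1) = 1 for all y ∈ Y. Define on Y × K the operations (y,k)+(y',k') = (y*y', (Λ_{y*y'})^{-1}(φ_{*y'}(Λ_y(k)) * Λ_{y'}(k'))) and (y,k)∘(y',k') = (y∘y', φ_{∘y'}(k) ∘ k'). Then (Y × K, +, ∘) is a digroup. -/
namespace Digroup

variable {D : Type*}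

abbrev mulGroup (H : Digroup D) : Group D :=
  letI : Mul D := ⟨H.mul⟩
  letI : Inv D := ⟨H.inv⟩
  letI : One D := ⟨H.one⟩
  Group.ofLeftAxioms H.mul_assoc H.one_mul H.inv_mul

abbrev omulGroup (H : Digroup D) : Group D :=
  letI : Mul D := ⟨H.omul⟩
  letI : Inv D := ⟨H.oinv⟩
  letI : One D := ⟨H.one⟩
  Group.ofLeftAxioms H.omul_assoc H.one_omul H.oinv_omul

def ofGroups (G₁ G₂ : Group D) (h : G₁.one = G₂.one) : Digroup D where
  mul := G₁.mul
  inv := G₁.inv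
  omul := G₂.mul
  oinv := G₂.inv
  one := G₁.one
  mul_assoc := G₁.mul_assoc
  one_mul := G₁.one_mul
  mul_one := G₁.mul_one
  inv_mul := G₁.inv_mul_cancel
  mul_inv := @mul_inv_cancel D G₁
  omul_assoc := G₂.mul_assoc
  one_omul := h ▸ G₂.one_mul
  omul_one := h ▸ G₂.mul_one
  oinv_omul := h ▸ G₂.inv_mul_cancel
  omul_oinv := h ▸ @mul_inv_cancel D G₂

end Digroup

section RightSemidirectProduct

variable {Y K : Type*} [Group Y] [Group K]

abbrev rightSemidirectGroup (φ : Y → K →* K) (hφ_mul : ∀ y y' k, φ (y * y') k = φ y' (φ y k))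
    (hφ_one : ∀ k, φ 1 k = k) : Group (Y × K) :=
  letI : Mul (Y × K) := ⟨fun p q => (p.1 * q.1, φ q.1 p.2 * q.2)⟩
  letI : Inv (Y × K) := ⟨fun p => (p.1⁻¹, φ p.1⁻¹ p.2⁻¹)⟩
  letI : One (Y × K) := ⟨(1, 1)⟩
  Group.ofLeftAxioms
    (fun p q r => Prod.ext (mul_assoc ..) (by
      show φ r.1 (φ q.1 p.2 * q.2) * r.2 = φ (q.1 * r.1) p.2 * (φ r.1 q.2 * r.2)
      rw [map_mul, hφ_mul, mul_assoc]))
    (fun p => Prod.ext (one_mul _) (by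
      show φ p.1 1 * p.2 = p.2
      rw [map_one, one_mul]))
    (fun p => Prod.ext (inv_mul_cancel _) (by
      show φ p.1 (φ p.1⁻¹ p.2⁻¹) * p.2 = 1
      rw [← hφ_mul, inv_mul_cancel, hφ_one, inv_mul_cancel]))

end RightSemidirectProduct

theorem stmt6_general {Y K : Type*} (HY : Digroup Y) (HK : Digroup K)
    (phiS phiC : Y → K → K) (Lam : Y → Equiv.Perm K)
    (hphiS_mul : ∀ y k k', phiS y (HK.mul k k') = HK.mul (phiS y k) (phiS y k'))
    (hphiS_anti : ∀ y y' k, phiS (HY.mul y y') k = phiS y' (phiS y k))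
    (hphiS_one : ∀ k, phiS HY.one k = k)
    (hphiC_omul : ∀ y k k', phiC y (HK.omul k k') = HK.omul (phiC y k) (phiC y k'))
    (hphiC_anti : ∀ y y' k, phiC (HY.omul y y') k = phiC y' (phiC y k))
    (hphiC_one : ∀ k, phiC HY.one k = k)
    (hLam_one : Lam HY.one = Equiv.refl K) :
    ∃ E : Digroup (Y × K),
      (∀ p q : Y × K, E.mul p q =
        (HY.mul p.1 q.1,
          (Lam (HY.mul p.1 q.1)).symm (HK.mul (phiS q.1 (Lam p.1 p.2)) (Lam q.1 q.2)))) ∧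
      (∀ p q : Y × K, E.omul p q = (HY.omul p.1 q.1, HK.omul (phiC q.1 p.2) q.2)) ∧
      E.one = (HY.one, HK.one) := by
  let plusGroup : Group (Y × K) :=
    letI := HY.mulGroup
    letI := HK.mulGroup
    letI := rightSemidirectGroup (fun y => MonoidHom.mk' (phiS y) (hphiS_mul y)) hphiS_anti hphiS_one
    (Equiv.prodShear (Equiv.refl Y) Lam).group
  let circGroup : Group (Y × K) :=
    letI := HY.omulGroup
    letI := HK.omulGroup
    rightSemidirectGroup (fun y => MonoidHom.mk' (phiC y) (hphiC_omul y)) hphiC_anti hphiC_one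
  have hone : plusGroup.one = (HY.one, HK.one) := by
    show (HY.one, (Lam HY.one).symm HK.one) = _
    rw [hLam_one]; rfl
  exact ⟨Digroup.ofGroups plusGroup circGroup hone, fun _ _ => rfl, fun _ _ => rfl, hone⟩

/-- Outer semidirect product of two digroups `Y` and `K` via two group
antihomomorphisms `φ_* : (Y,*) → Aut(K,*)`, `φ_∘ : (Y,∘) → Aut(K,∘)` and a pointed
map `Λ : (Y,1) → (Sym(K), id)` with `Λ_y(1) = 1`: the operations
`(y,k)+(y',k') = (y*y', Λ_{y*y'}⁻¹(φ_{*y'}(Λ_y(k)) * Λ_{y'}(k')))` and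
`(y,k)∘(y',k') = (y∘y', φ_{∘y'}(k) ∘ k')` make `Y × K` a digroup. -/
theorem stmt6 {Y K : Type*} (HY : Digroup Y) (HK : Digroup K)
    (phiS phiC : Y → K → K) (Lam : Y → Equiv.Perm K)
    (hphiS_bij : ∀ y, Function.Bijective (phiS y))
    (hphiS_mul : ∀ y k k', phiS y (HK.mul k k') = HK.mul (phiS y k) (phiS y k'))
    (hphiS_anti : ∀ y y' k, phiS (HY.mul y y') k = phiS y' (phiS y k))
    (hphiS_one : ∀ k, phiS HY.one k = k)
    (hphiC_bij : ∀ y, Function.Bijective (phiC y))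
    (hphiC_omul : ∀ y k k', phiC y (HK.omul k k') = HK.omul (phiC y k) (phiC y k'))
    (hphiC_anti : ∀ y y' k, phiC (HY.omul y y') k = phiC y' (phiC y k))
    (hphiC_one : ∀ k, phiC HY.one k = k)
    (hLam_one : Lam HY.one = Equiv.refl K)
    (hLam_pt : ∀ y, Lam y HK.one = HK.one) :
    ∃ E : Digroup (Y × K),
      (∀ p q : Y × K, E.mul p q =
        (HY.mul p.1 q.1,
          (Lam (HY.mul p.1 q.1)).symm (HK.mul (phiS q.1 (Lam p.1 p.2)) (Lam q.1 q.2)))) ∧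
      (∀ p q : Y × K, E.omul p q = (HY.omul p.1 q.1, HK.omul (phiC q.1 p.2) q.2)) ∧
      E.one = (HY.one, HK.one) :=
  stmt6_general HY HK phiS phiC Lam hphiS_mul hphiS_anti hphiS_one hphiC_omul hphiC_anti hphiC_one
    hLam_one
end

section
/- Let X be a nonempty heap, Y a subheap of X, and ω a congruence of X. The following are equivalent: (a) Y ∩ [x]_ω is a singleton for every x ∈ X; (b) there exists an idempotent heap endomorphism of X with image Y and kernel ω; (c) the map g : Y → X/ω, y ↦ [y]_ω, is a heap isomorphism. -/
/-- A heap: a set with an associative Mal'tsev ternary operation. -/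
structure Heap (X : Type*) where
  op : X → X → X → X
  mal1 : ∀ x y, op x x y = y
  mal2 : ∀ x y, op x y y = x
  assoc : ∀ x y z w u, op (op x y z) w u = op x y (op z w u)

/-!
If every class of `ω` meets `Y` in exactly one point, sending `x` to that point is a retraction
onto `Y` with kernel `ω`. It is a heap endomorphism because `Y` is a subheap and `ω` a congruence:
`[f x, f y, f z]` is then a point of `Y` in the class of `[x, y, z]`. The remaining implications
only use that a retraction with kernel `ω` identifies its image with `X/ω`.
-/

section

variable {X : Type*}

theorem Heap.exists_idempotent_hom_of_existsUnique_rep (H : Heap X) {Y : Set X}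
    (hY : ∀ x ∈ Y, ∀ y ∈ Y, ∀ z ∈ Y, H.op x y z ∈ Y)
    {ω : X → X → Prop} (hωe : Equivalence ω)
    (hωc : ∀ x x' y y' z z', ω x x' → ω y y' → ω z z' → ω (H.op x y z) (H.op x' y' z'))
    (hrep : ∀ x : X, ∃! y, y ∈ Y ∧ ω y x) :
    ∃ f : X → X, (∀ x y z, f (H.op x y z) = H.op (f x) (f y) (f z)) ∧
      f ∘ f = f ∧ Set.range f = Y ∧ ∀ x y, f x = f y ↔ ω x y := by
  choose f hf hf_unique using hrep
  have hfY : ∀ x, f x ∈ Y := fun x => (hf x).1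
  have hfω : ∀ x, ω (f x) x := fun x => (hf x).2
  have hfix : ∀ y ∈ Y, f y = y := fun y hy => (hf_unique y y ⟨hy, hωe.refl y⟩).symm
  refine ⟨f, fun x y z => ?_, funext fun x => hfix _ (hfY x), ?_,
    fun x y => ⟨fun h => ?_, fun h => ?_⟩⟩
  · exact (hf_unique _ _ ⟨hY _ (hfY x) _ (hfY y) _ (hfY z),
      hωc _ _ _ _ _ _ (hfω x) (hfω y) (hfω z)⟩).symm
  · exact Set.Subset.antisymm (Set.range_subset_iff.2 hfY) fun y hy => ⟨y, hfix y hy⟩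
  · exact hωe.trans (hωe.symm (hfω x)) (h ▸ hfω y)
  · exact hf_unique y _ ⟨hfY x, hωe.trans (hfω x) h⟩

theorem bijective_quotientMk_of_idempotent {s : Setoid X} {Y : Set X} {f : X → X}
    (hidem : f ∘ f = f) (hrange : Set.range f = Y) (hker : ∀ x y, f x = f y ↔ s x y) :
    Function.Bijective (fun y : Y => Quotient.mk s (y : X)) := by
  have hfix : ∀ y ∈ Y, f y = y := by
    intro y hy
    obtain ⟨x, rfl⟩ := hrange ▸ hy
    exact congrFun hidem x
  refine ⟨fun ⟨y₁, hy₁⟩ ⟨y₂, hy₂⟩ h => Subtype.ext ?_, Quotient.ind fun x => ?_⟩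
  · simpa only [hfix y₁ hy₁, hfix y₂ hy₂] using (hker y₁ y₂).2 (Quotient.exact h)
  · exact ⟨⟨f x, hrange ▸ ⟨x, rfl⟩⟩,
      Quotient.sound ((hker (f x) x).1 (congrFun hidem x))⟩

theorem existsUnique_rep_of_bijective_quotientMk {s : Setoid X} {Y : Set X}
    (hbij : Function.Bijective (fun y : Y => Quotient.mk s (y : X))) :
    ∀ x : X, ∃! y, y ∈ Y ∧ s y x := by
  intro x
  obtain ⟨⟨y, hy⟩, hyx⟩ := hbij.2 (Quotient.mk s x)
  refine ⟨y, ⟨hy, Quotient.exact hyx⟩, fun y' ⟨hy', hy'x⟩ => ?_⟩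
  exact congrArg Subtype.val (hbij.1 ((Quotient.sound hy'x).trans hyx.symm) :
    (⟨y', hy'⟩ : Y) = ⟨y, hy⟩)

end

theorem stmt12_general {X : Type*} (H : Heap X)
    (Y : Set X) (hY : ∀ x ∈ Y, ∀ y ∈ Y, ∀ z ∈ Y, H.op x y z ∈ Y)
    (ω : X → X → Prop) (hωe : Equivalence ω)
    (hωc : ∀ x x' y y' z z', ω x x' → ω y y' → ω z z' →
      ω (H.op x y z) (H.op x' y' z')) :
    List.TFAE
      [ ∀ x : X, ∃! y, y ∈ Y ∧ ω y x,
        ∃ f : X → X, (∀ x y z, f (H.op x y z) = H.op (f x) (f y) (f z)) ∧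
          f ∘ f = f ∧ Set.range f = Y ∧ (∀ x y, f x = f y ↔ ω x y),
        Function.Bijective (fun y : Y => Quotient.mk ⟨ω, hωe⟩ (y : X)) ] := by
  tfae_have 1 → 2 := H.exists_idempotent_hom_of_existsUnique_rep hY hωe hωc
  tfae_have 2 → 3 := fun ⟨_, _, hidem, hrange, hker⟩ =>
    bijective_quotientMk_of_idempotent hidem hrange hker
  tfae_have 3 → 1 := existsUnique_rep_of_bijective_quotientMk
  tfae_finish

/-- Let `X` be a nonempty heap, `Y` a subheap, `ω` a congruence. TFAE:
(a) `Y ∩ [x]_ω` is a singleton for every `x`;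
(b) there is an idempotent heap endomorphism of `X` with image `Y` and kernel `ω`;
(c) the map `Y → X/ω`, `y ↦ [y]_ω`, is a heap isomorphism (the map is always a
heap homomorphism, so this says it is bijective). -/
theorem stmt12 {X : Type*} (H : Heap X) (hne : Nonempty X)
    (Y : Set X) (hY : ∀ x ∈ Y, ∀ y ∈ Y, ∀ z ∈ Y, H.op x y z ∈ Y)
    (ω : X → X → Prop) (hωe : Equivalence ω)
    (hωc : ∀ x x' y y' z z', ω x x' → ω y y' → ω z z' →
      ω (H.op x y z) (H.op x' y' z')) :
    List.TFAE
      [ ∀ x : X, ∃! y, y ∈ Y ∧ ω y x,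
        ∃ f : X → X, (∀ x y z, f (H.op x y z) = H.op (f x) (f y) (f z)) ∧
          f ∘ f = f ∧ Set.range f = Y ∧ (∀ x y, f x = f y ↔ ω x y),
        Function.Bijective (fun y : Y => Quotient.mk ⟨ω, hωe⟩ (y : X)) ] :=
  stmt12_general H Y hY ω hωe hωc
end

section
/- Let X be a heap, f an idempotent heap endomorphism of X with kernel ω, Y = f(X), and e ∈ Y fixed. Then [e]_ω = f^{-1}(e), and the map α : Y → Aut_Heap([e]_ω) defined by α_y(k) = [y, e, [k, y, e]] is a heap homomorphism into the automorphism heap of [e]_ω (with heap structure [f,g,h] = f ∘ g^{-1} ∘ h), with α_e = id. -/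
namespace Heap

variable {X : Type*} (H : Heap X)

theorem op_op_cancel (x y z w : X) : H.op x y (H.op y z w) = H.op x z w := by
  rw [← H.assoc, H.mal2]

theorem op_op_mid (x p q r w : X) : H.op x (H.op p q r) w = H.op x r (H.op q p w) := by
  have h : H.op (H.op p q r) r (H.op q p w) = w := by
    rw [H.assoc, H.mal1, H.op_op_cancel, H.mal1]
  calc H.op x (H.op p q r) w
      = H.op x (H.op p q r) (H.op (H.op p q r) r (H.op q p w)) := by rw [h]
    _ = H.op x r (H.op q p w) := H.op_op_cancel ..

/-- In group notation, `conj a b k = a b⁻¹ k a⁻¹ b`. -/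
def conj (a b k : X) : X := H.op a b (H.op k a b)

theorem conj_self (a k : X) : H.conj a a k = k := by
  simp [conj, H.mal1, H.mal2]

theorem conj_apply_left (a b : X) : H.conj a b a = a := by
  simp [conj, H.mal1, H.mal2]

theorem conj_apply_right (a b : X) : H.conj a b b = b := by
  simp [conj, H.mal1, H.op_op_cancel]

theorem conj_swap_conj (a b : X) : Function.LeftInverse (H.conj b a) (H.conj a b) := by
  intro k
  simp [conj, H.assoc, H.mal1, H.mal2, H.op_op_cancel]

theorem conj_op (a b k₁ k₂ k₃ : X) :
    H.conj a b (H.op k₁ k₂ k₃) = H.op (H.conj a b k₁) (H.conj a b k₂) (H.conj a b k₃) := by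
  simp [conj, H.assoc, H.mal1, H.op_op_cancel, H.op_op_mid]

theorem conj_op_conj (a b e k : X) : H.conj (H.op a e b) e k = H.conj a e (H.conj b e k) := by
  simp [conj, H.assoc, H.op_op_mid]

theorem conj_op_of_conj_eq {y₁ y₂ y₃ e k m : X} (h : H.conj y₂ e m = H.conj y₃ e k) :
    H.conj (H.op y₁ y₂ y₃) e k = H.conj y₁ e m := by
  calc H.conj (H.op y₁ y₂ y₃) e k
      = H.conj (H.op (H.op y₁ y₂ e) e y₃) e k := by rw [H.assoc, H.mal1]
    _ = H.conj (H.op y₁ y₂ e) e (H.conj y₂ e m) := by rw [H.conj_op_conj, h]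
    _ = H.conj (H.op (H.op y₁ y₂ e) e y₂) e m := (H.conj_op_conj ..).symm
    _ = H.conj y₁ e m := by rw [H.assoc, H.mal1, H.mal2]

theorem bijOn_conj {a b : X} {s : Set X} (hab : Set.MapsTo (H.conj a b) s s)
    (hba : Set.MapsTo (H.conj b a) s s) : Set.BijOn (H.conj a b) s s :=
  Set.InvOn.bijOn ⟨fun k _ => H.conj_swap_conj a b k, fun k _ => H.conj_swap_conj b a k⟩ hab hba

theorem mapsTo_conj_preimage {f : X → X}
    (hf : ∀ x y z, f (H.op x y z) = H.op (f x) (f y) (f z)) (a b c : X) :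
    Set.MapsTo (H.conj a b) (f ⁻¹' {c}) (f ⁻¹' {H.conj (f a) (f b) c}) := by
  intro k (hk : f k = c)
  simp only [Set.mem_preimage, Set.mem_singleton_iff, conj, hf, hk]

end Heap

/-- Let `X` be a heap, `f` an idempotent heap endomorphism with kernel
`ω = {(x,y) : f x = f y}`, `Y = f(X)`, `e ∈ Y`, and `K = [e]_ω`. Then
`[e]_ω = f⁻¹(e)`, and `α : Y → Aut_Heap(K)`, `α_y(k) = [y, e, [k, y, e]]`, is a
heap homomorphism into the automorphism heap of `K` (with heap operation
`[f,g,h] = f ∘ g⁻¹ ∘ h`), with `α_e = id`. Here the homomorphism property is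
expressed via `m = α_{y₂}⁻¹(α_{y₃}(k))`. -/
theorem stmt13 {X : Type*} (H : Heap X) (f : X → X)
    (hf_endo : ∀ x y z, f (H.op x y z) = H.op (f x) (f y) (f z))
    (hf_idem : f ∘ f = f)
    (e : X) (he : e ∈ Set.range f) :
    ({x | f x = f e} = f ⁻¹' {e}) ∧
    (∀ y ∈ Set.range f,
      Set.BijOn (fun k => H.op y e (H.op k y e)) {x | f x = f e} {x | f x = f e} ∧
      (∀ k₁ ∈ {x | f x = f e}, ∀ k₂ ∈ {x | f x = f e}, ∀ k₃ ∈ {x | f x = f e},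
        H.op y e (H.op (H.op k₁ k₂ k₃) y e) =
          H.op (H.op y e (H.op k₁ y e)) (H.op y e (H.op k₂ y e))
            (H.op y e (H.op k₃ y e)))) ∧
    (∀ y₁ ∈ Set.range f, ∀ y₂ ∈ Set.range f, ∀ y₃ ∈ Set.range f,
      ∀ k ∈ {x | f x = f e}, ∀ m ∈ {x | f x = f e},
        H.op y₂ e (H.op m y₂ e) = H.op y₃ e (H.op k y₃ e) →
          H.op (H.op y₁ y₂ y₃) e (H.op k (H.op y₁ y₂ y₃) e) =
            H.op y₁ e (H.op m y₁ e)) ∧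
    (∀ k ∈ {x | f x = f e}, H.op e e (H.op k e e) = k) := by
  have hfix : ∀ x ∈ Set.range f, f x = x := by
    rintro x ⟨a, rfl⟩
    exact congrFun hf_idem a
  have hfe : f e = e := hfix e he
  have hfiber : {x | f x = f e} = f ⁻¹' {e} := by
    rw [hfe]
    rfl
  have hmaps : ∀ {a b}, f a = a → f b = b → H.conj a b e = e →
      Set.MapsTo (H.conj a b) (f ⁻¹' {e}) (f ⁻¹' {e}) := by
    intro a b ha hb h
    simpa only [ha, hb, h] using H.mapsTo_conj_preimage hf_endo a b e
  refine ⟨hfiber, fun y hy => ⟨?_, fun k₁ _ k₂ _ k₃ _ => H.conj_op y e k₁ k₂ k₃⟩,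
    fun y₁ _ y₂ _ y₃ _ k _ m _ h => H.conj_op_of_conj_eq h, fun k _ => H.conj_self e k⟩
  rw [hfiber]
  exact H.bijOn_conj (hmaps (hfix y hy) hfe (H.conj_apply_right y e))
    (hmaps hfe (hfix y hy) (H.conj_apply_left e y))
end

section
/- Let K and Y be heaps, α : Y → Aut_Heap(K) a heap homomorphism, and y ∈ Y an element with α_y = id_K. Then the ternary operation on K × Y defined by [(k₁,y₁),(k₂,y₂),(k₃,y₃)] = ([k₁, α_{[y₁,y₂,y]}(k₂), α_{[y₁,y₂,y]}(k₃)], [y₁,y₂,y₃]) makes K × Y a heap, and for each fixed k ∈ K the map f(a,b) = (k,b) is an idempotent heap endomorphism of K × Y. -/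
/-!
Write `α_b` for `al b`. Since `α` is a heap homomorphism into `Aut(K)` and `α_y = id`,
`α_{[a,b,c]} = α_{[a,b,y]} ∘ α_c`; combined with associativity in `Y` this gives the cocycle
identity `α_{[[y₁,y₂,y₃],y₄,y]} = α_{[y₁,y₂,y]} ∘ α_{[y₃,y₄,y]}`, which together with `α` acting
by heap automorphisms reduces associativity of the twisted operation on `K × Y` to that of `K`.
The Mal'tsev identities come from those of `K` and `Y` and `α_{[y₁,y₁,y]} = α_y = id`.
-/

namespace Heap

variable {K Y : Type*} (HK : Heap K) (HY : Heap Y) (al : Y → Equiv.Perm K) (y : Y)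

def semidirectOp (p q r : K × Y) : K × Y :=
  (HK.op p.1 (al (HY.op p.2 q.2 y) q.1) (al (HY.op p.2 q.2 y) r.1), HY.op p.2 q.2 r.2)

theorem apply_op_eq_apply_op_apply_of_eq_refl
    (hal_hom : ∀ b₁ b₂ b₃ k, al (HY.op b₁ b₂ b₃) k = al b₁ ((al b₂).symm (al b₃ k)))
    (hy : al y = Equiv.refl K) (a b c : Y) (k : K) :
    al (HY.op a b c) k = al (HY.op a b y) (al c k) := by
  rw [hal_hom, hal_hom, hy, Equiv.refl_apply]

theorem semidirectOp_self_left (hy : al y = Equiv.refl K) (p q : K × Y) :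
    semidirectOp HK HY al y p p q = q := by
  simp only [semidirectOp, HY.mal1, hy, Equiv.refl_apply, HK.mal1]

theorem semidirectOp_self_right (p q : K × Y) : semidirectOp HK HY al y p q q = p := by
  simp only [semidirectOp, HK.mal2, HY.mal2]

theorem semidirectOp_assoc
    (hal_endo : ∀ b k₁ k₂ k₃, al b (HK.op k₁ k₂ k₃) = HK.op (al b k₁) (al b k₂) (al b k₃))
    (hal_hom : ∀ b₁ b₂ b₃ k, al (HY.op b₁ b₂ b₃) k = al b₁ ((al b₂).symm (al b₃ k)))
    (hy : al y = Equiv.refl K) (p q r s t : K × Y) :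
    semidirectOp HK HY al y (semidirectOp HK HY al y p q r) s t =
      semidirectOp HK HY al y p q (semidirectOp HK HY al y r s t) := by
  have cocycle : ∀ k, al (HY.op p.2 q.2 (HY.op r.2 s.2 y)) k =
      al (HY.op p.2 q.2 y) (al (HY.op r.2 s.2 y) k) :=
    apply_op_eq_apply_op_apply_of_eq_refl HY al y hal_hom hy _ _ _
  simp only [semidirectOp, HY.assoc, cocycle, hal_endo, HK.assoc]

def semidirect
    (hal_endo : ∀ b k₁ k₂ k₃, al b (HK.op k₁ k₂ k₃) = HK.op (al b k₁) (al b k₂) (al b k₃))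
    (hal_hom : ∀ b₁ b₂ b₃ k, al (HY.op b₁ b₂ b₃) k = al b₁ ((al b₂).symm (al b₃ k)))
    (hy : al y = Equiv.refl K) : Heap (K × Y) where
  op := semidirectOp HK HY al y
  mal1 := semidirectOp_self_left HK HY al y hy
  mal2 := semidirectOp_self_right HK HY al y
  assoc := semidirectOp_assoc HK HY al y hal_endo hal_hom hy

theorem semidirectOp_const_fst (k : K) (p q r : K × Y) :
    (k, (semidirectOp HK HY al y p q r).2) =
      semidirectOp HK HY al y (k, p.2) (k, q.2) (k, r.2) := by
  simp only [semidirectOp, HK.mal2]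

end Heap

/-- Let `K` and `Y` be heaps, `α : Y → Aut_Heap(K)` a heap homomorphism (into the
heap of heap automorphisms of `K`, with operation `[f,g,h] = f ∘ g⁻¹ ∘ h`), and
`y ∈ Y` with `α_y = id`. Then the ternary operation
`[(k₁,y₁),(k₂,y₂),(k₃,y₃)] = ([k₁, α_{[y₁,y₂,y]}(k₂), α_{[y₁,y₂,y]}(k₃)], [y₁,y₂,y₃])`
makes `K × Y` a heap, and for each `k ∈ K` the map `f(a,b) = (k,b)` is an
idempotent heap endomorphism of `K × Y`. -/
theorem stmt14 {K Y : Type*} (HK : Heap K) (HY : Heap Y)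
    (al : Y → Equiv.Perm K)
    (hal_endo : ∀ b k₁ k₂ k₃, al b (HK.op k₁ k₂ k₃) = HK.op (al b k₁) (al b k₂) (al b k₃))
    (hal_hom : ∀ b₁ b₂ b₃ k, al (HY.op b₁ b₂ b₃) k = al b₁ ((al b₂).symm (al b₃ k)))
    (y : Y) (hy : al y = Equiv.refl K)
    (op3 : K × Y → K × Y → K × Y → K × Y)
    (hop3 : ∀ p₁ p₂ p₃ : K × Y, op3 p₁ p₂ p₃ =
      (HK.op p₁.1 (al (HY.op p₁.2 p₂.2 y) p₂.1) (al (HY.op p₁.2 p₂.2 y) p₃.1),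
        HY.op p₁.2 p₂.2 p₃.2)) :
    (∃ E : Heap (K × Y), E.op = op3) ∧
    (∀ k : K,
      ((fun p : K × Y => ((k, p.2) : K × Y)) ∘ (fun p : K × Y => ((k, p.2) : K × Y))
        = fun p : K × Y => ((k, p.2) : K × Y)) ∧
      (∀ p₁ p₂ p₃ : K × Y,
        (fun p : K × Y => ((k, p.2) : K × Y)) (op3 p₁ p₂ p₃)
          = op3 ((fun p : K × Y => ((k, p.2) : K × Y)) p₁)
              ((fun p : K × Y => ((k, p.2) : K × Y)) p₂)
              ((fun p : K × Y => ((k, p.2) : K × Y)) p₃))) := by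
  obtain rfl : op3 = Heap.semidirectOp HK HY al y := by
    funext p q r
    exact hop3 p q r
  exact ⟨⟨Heap.semidirect HK HY al y hal_endo hal_hom hy, rfl⟩,
    fun k => ⟨rfl, Heap.semidirectOp_const_fst HK HY al y k⟩⟩
end
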